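/- arXiv:2406.13783 — 14 statements merged into one kernel-verified Lean document; each statement's English description precedes it below -/
import Mathlib

section
/- (Veinott) A sublattice S of a poset P is subcomplete in P if and only if it is chain-subcomplete in P. That is, if for every nonempty chain C ⊆ S both sup_P(C) and inf_P(C) exist and lie in S, then for every nonempty subset A ⊆ S both sup_P(A) and inf_P(A) exist and lie in S. -/
lemma veinott_aux {P : Type*} [PartialOrder P] (S : Set P)
    (hsub : ∀ x ∈ S, ∀ y ∈ S, ∃ a ∈ S, IsLUB {x, y} a)
    (hchain : ∀ C : Set P, C ⊆ S → C.Nonempty → IsChain (· ≤ ·) C → ∃ a ∈ S, IsLUB C a)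
    (A : Set P) (hA : A ⊆ S) (hne : A.Nonempty) : ∃ a ∈ S, IsLUB A a := by
  classical
  set E : Set P := {x | x ∈ S ∧ ∃ B ⊆ A, B.Nonempty ∧ IsLUB B x} with hE
  obtain ⟨a₀, ha₀⟩ := hne
  have ha₀E : a₀ ∈ E :=
    ⟨hA ha₀, {a₀}, by simpa using ha₀, ⟨a₀, rfl⟩, isLUB_singleton⟩
  have zorn := zorn_le_nonempty₀ E ?_ a₀ ha₀E
  · obtain ⟨m, -, hmE, hmax⟩ := zorn
    obtain ⟨hmS, B, hBA, hBne, hBlub⟩ := hmE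
    have hub : ∀ a ∈ A, a ≤ m := by
      intro a ha
      obtain ⟨j, hjS, hjlub⟩ := hsub m hmS a (hA ha)
      have hmj : m ≤ j := hjlub.1 (by simp)
      have haj : a ≤ j := hjlub.1 (by simp)
      have hjE : j ∈ E := by
        refine ⟨hjS, B ∪ {a}, ?_, ⟨a, by simp⟩, ?_⟩
        · exact Set.union_subset hBA (by simpa using ha)
        · constructor
          · rintro b (hb | hb)
            · exact le_trans (hBlub.1 hb) hmj
            · simp only [Set.mem_singleton_iff] at hb; subst hb; exact haj
          · intro u hu
            have hmu : m ≤ u := hBlub.2 fun b hb => hu (Or.inl hb)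
            have hau : a ≤ u := hu (Or.inr rfl)
            exact hjlub.2 (by rintro x (hx | hx) <;> simp_all)
      have := hmax hjE hmj
      exact le_trans haj this
    refine ⟨m, hmS, hub, fun u hu => hBlub.2 fun b hb => hu (hBA hb)⟩
  · intro c hcE hchainc y hyc
    obtain ⟨m, hmS, hm⟩ := hchain c (fun x hx => (hcE hx).1) ⟨y, hyc⟩ hchainc
    refine ⟨m, ⟨hmS, ?_⟩, fun z hz => hm.1 hz⟩
    choose B hBA hBne hBlub using fun (x : c) => (hcE x.2).2
    refine ⟨⋃ x : c, B x, Set.iUnion_subset fun x => hBA x, ?_, ?_, ?_⟩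
    · obtain ⟨b, hb⟩ := hBne ⟨y, hyc⟩
      exact ⟨b, Set.mem_iUnion.2 ⟨⟨y, hyc⟩, hb⟩⟩
    · intro b hb
      obtain ⟨x, hx⟩ := Set.mem_iUnion.1 hb
      exact le_trans ((hBlub x).1 hx) (hm.1 x.2)
    · intro u hu
      refine hm.2 fun x hx => (hBlub ⟨x, hx⟩).2 fun b hb => hu ?_
      exact Set.mem_iUnion.2 ⟨⟨x, hx⟩, hb⟩

/-- (Veinott) A sublattice `S` of a poset `P` is subcomplete in `P`
if and only if it is chain-subcomplete in `P`. -/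
theorem veinott_subcomplete_iff_chain_subcomplete
    {P : Type*} [PartialOrder P] (S : Set P)
    (hsub : ∀ x ∈ S, ∀ y ∈ S,
      (∃ a ∈ S, IsLUB {x, y} a) ∧ (∃ b ∈ S, IsGLB {x, y} b)) :
    (∀ A : Set P, A ⊆ S → A.Nonempty →
        (∃ a ∈ S, IsLUB A a) ∧ (∃ b ∈ S, IsGLB A b)) ↔
    (∀ C : Set P, C ⊆ S → C.Nonempty → IsChain (· ≤ ·) C →
        (∃ a ∈ S, IsLUB C a) ∧ (∃ b ∈ S, IsGLB C b)) := by
  constructor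
  · intro h C hCS hCne _
    exact h C hCS hCne
  · intro h A hAS hAne
    constructor
    · exact veinott_aux S (fun x hx y hy => (hsub x hx y hy).1)
        (fun C hCS hCne hch => (h C hCS hCne hch).1) A hAS hAne
    · have := veinott_aux (P := Pᵒᵈ) S (fun x hx y hy => (hsub x hx y hy).2)
        (fun C hCS hCne hch => (h C hCS hCne hch.symm).2) A hAS hAne
      exact this
end

section
/- A lattice having no infinite chains is a complete lattice. -/
/-!
Without infinite chains there are neither strictly increasing nor strictly decreasing
sequences, so every nonempty set has maximal and minimal elements. The set of finite
joins of a nonempty `A` then has a maximal element `m`; for `a ∈ A`, `a ⊔ m` is again a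
finite join above `m`, hence equals `m`, so `m` bounds `A` and is its least upper bound.
The infimum is the same argument in the order dual.
-/

section

variable {α : Type*}

theorem wellFoundedGT_of_isChain_finite [Preorder α]
    (h : ∀ C : Set α, IsChain (· ≤ ·) C → C.Finite) : WellFoundedGT α := by
  refine ⟨RelEmbedding.wellFounded_iff_isEmpty.2 ⟨fun f => ?_⟩⟩
  have hf : StrictMono f := fun _ _ hab => f.map_rel_iff.2 hab
  exact Set.infinite_range_of_injective f.injective (h _ hf.monotone.isChain_range)

theorem exists_isLUB_of_wellFoundedGT [SemilatticeSup α] [WellFoundedGT α] {s : Set α}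
    (hs : s.Nonempty) : ∃ a, IsLUB s a := by
  obtain ⟨m, hm⟩ := exists_maximal_of_wellFoundedGT (· ∈ supClosure s) (hs.mono subset_supClosure)
  refine ⟨m, isLUB_supClosure.1 ⟨fun x hx => ?_, fun _ hu => hu hm.prop⟩⟩
  exact le_sup_left.trans (hm.le_of_ge (supClosed_supClosure hx hm.prop) le_sup_right)

end

/-- A lattice having no infinite chains is complete: every nonempty subset
has a supremum and an infimum. -/
theorem lattice_no_infinite_chains_complete
    {L : Type*} [Lattice L]
    (hfin : ∀ C : Set L, IsChain (· ≤ ·) C → C.Finite) :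
    ∀ A : Set L, A.Nonempty → (∃ a, IsLUB A a) ∧ (∃ b, IsGLB A b) := by
  intro A hA
  have := wellFoundedGT_of_isChain_finite hfin
  have := wellFoundedGT_of_isChain_finite (α := Lᵒᵈ) fun C hC => hfin C hC.symm
  exact ⟨exists_isLUB_of_wellFoundedGT hA, exists_isLUB_of_wellFoundedGT (α := Lᵒᵈ) hA⟩
end

section
/- Let L be a complete lattice and let A ⊆ L be closed in the interval topology of L. Then A is chain-subcomplete in L: for every nonempty chain C ⊆ A, both sup_L(C) and inf_L(C) belong to A. -/
/-- The interval topology of a preorder: the smallest topology in which all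
rays `{x | a ≤ x}` and `{x | x ≤ a}` are closed. -/
def intervalTopology (L : Type*) [Preorder L] : TopologicalSpace L :=
  TopologicalSpace.generateFrom {s | ∃ a : L, s = (Set.Ici a)ᶜ ∨ s = (Set.Iic a)ᶜ}

/-- A subset of a complete lattice closed in the interval topology is
chain-subcomplete. -/
theorem closed_intervalTopology_chainSubcomplete
    {L : Type*} [CompleteLattice L] (A : Set L)
    (hA : @IsClosed L (intervalTopology L) A) :
    ∀ C : Set L, C ⊆ A → C.Nonempty → IsChain (· ≤ ·) C →
      sSup C ∈ A ∧ sInf C ∈ A := by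
  intro C hCA hCne hchain
  have hopen : TopologicalSpace.GenerateOpen
      {s | ∃ a : L, s = (Set.Ici a)ᶜ ∨ s = (Set.Iic a)ᶜ} Aᶜ := hA.isOpen_compl
  have key : ∀ U : Set L,
      TopologicalSpace.GenerateOpen {s | ∃ a : L, s = (Set.Ici a)ᶜ ∨ s = (Set.Iic a)ᶜ} U →
      (sSup C ∈ U → ∃ c ∈ C, ∀ c' ∈ C, c ≤ c' → c' ∈ U) ∧
      (sInf C ∈ U → ∃ c ∈ C, ∀ c' ∈ C, c' ≤ c → c' ∈ U) := by
    intro U hU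
    induction hU with
    | basic s hs =>
      obtain ⟨a, rfl | rfl⟩ := hs
      · constructor
        · intro h
          obtain ⟨c, hc⟩ := hCne
          refine ⟨c, hc, fun c' hc' _ hle => h ?_⟩
          exact le_trans hle (le_sSup hc')
        · intro h
          have h' : ¬ a ≤ sInf C := h
          have : ∃ c ∈ C, ¬ a ≤ c := by
            by_contra hcon
            push_neg at hcon
            exact h' (le_sInf hcon)
          obtain ⟨c, hc, hac⟩ := this
          exact ⟨c, hc, fun c' _ hle hmem => hac (le_trans hmem hle)⟩
      · constructor
        · intro h
          have h' : ¬ sSup C ≤ a := h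
          have : ∃ c ∈ C, ¬ c ≤ a := by
            by_contra hcon
            push_neg at hcon
            exact h' (sSup_le hcon)
          obtain ⟨c, hc, hca⟩ := this
          exact ⟨c, hc, fun c' _ hle hmem => hca (le_trans hle hmem)⟩
        · intro h
          obtain ⟨c, hc⟩ := hCne
          refine ⟨c, hc, fun c' hc' hle hmem => h ?_⟩
          exact le_trans (sInf_le hc') hmem
    | univ =>
      obtain ⟨c, hc⟩ := hCne
      exact ⟨fun _ => ⟨c, hc, fun _ _ _ => trivial⟩,
             fun _ => ⟨c, hc, fun _ _ _ => trivial⟩⟩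
    | inter s t _ _ ihs iht =>
      constructor
      · intro h
        obtain ⟨c1, hc1, h1⟩ := ihs.1 h.1
        obtain ⟨c2, hc2, h2⟩ := iht.1 h.2
        rcases hchain.total hc1 hc2 with hle | hle
        · exact ⟨c2, hc2, fun c' hc' hle' =>
            ⟨h1 c' hc' (le_trans hle hle'), h2 c' hc' hle'⟩⟩
        · exact ⟨c1, hc1, fun c' hc' hle' =>
            ⟨h1 c' hc' hle', h2 c' hc' (le_trans hle hle')⟩⟩
      · intro h
        obtain ⟨c1, hc1, h1⟩ := ihs.2 h.1
        obtain ⟨c2, hc2, h2⟩ := iht.2 h.2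
        rcases hchain.total hc1 hc2 with hle | hle
        · exact ⟨c1, hc1, fun c' hc' hle' =>
            ⟨h1 c' hc' hle', h2 c' hc' (le_trans hle' hle)⟩⟩
        · exact ⟨c2, hc2, fun c' hc' hle' =>
            ⟨h1 c' hc' (le_trans hle' hle), h2 c' hc' hle'⟩⟩
    | sUnion S _ ih =>
      constructor
      · intro h
        obtain ⟨s, hs, hmem⟩ := h
        obtain ⟨c, hc, h1⟩ := (ih s hs).1 hmem
        exact ⟨c, hc, fun c' hc' hle => ⟨s, hs, h1 c' hc' hle⟩⟩
      · intro h
        obtain ⟨s, hs, hmem⟩ := h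
        obtain ⟨c, hc, h1⟩ := (ih s hs).2 hmem
        exact ⟨c, hc, fun c' hc' hle => ⟨s, hs, h1 c' hc' hle⟩⟩
  constructor
  · by_contra hnot
    obtain ⟨c, hc, h1⟩ := (key Aᶜ hopen).1 hnot
    exact h1 c hc le_rfl (hCA hc)
  · by_contra hnot
    obtain ⟨c, hc, h1⟩ := (key Aᶜ hopen).2 hnot
    exact h1 c hc le_rfl (hCA hc)
end

section
/- Let f : L → C be a function from a complete lattice L to a complete chain C. Then f is order upper semicontinuous if and only if f is upper chain subcomplete. That is, f satisfies limsup_{x∈D, x↑sup D} f(x) ≤ f(sup_L D) and limsup_{x∈D, x↓inf D} f(x) ≤ f(inf_L D) for every nonempty chain D ⊆ L, if and only if for every a ∈ C and every nonempty chain D contained in {x ∈ L : f(x) ≥ a}, both sup_L(D) and inf_L(D) lie in {x ∈ L : f(x) ≥ a}. -/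
private lemma aux_sup {L : Type*} [CompleteLattice L] {C : Type*}
    [CompleteLinearOrder C] (f : L → C)
    (h : ∀ a : C, ∀ D : Set L, D ⊆ {x | a ≤ f x} → D.Nonempty →
        IsChain (· ≤ ·) D → a ≤ f (sSup D)) :
    ∀ D : Set L, D.Nonempty → IsChain (· ≤ ·) D →
        sInf ((fun i => sSup (f '' {j ∈ D | i ≤ j})) '' D) ≤ f (sSup D) := by
  intro D hne hch
  set a := sInf ((fun i => sSup (f '' {j ∈ D | i ≤ j})) '' D) with ha
  by_contra hcon
  have hc : f (sSup D) < a := not_le.mp hcon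
  set c := f (sSup D) with hcdef
  -- each tail sup is ≥ a
  have htail : ∀ i ∈ D, a ≤ sSup (f '' {j ∈ D | i ≤ j}) := by
    intro i hi
    exact sInf_le (Set.mem_image_of_mem _ hi)
  -- given b < a, every tail contains j with b < f j
  have hwit : ∀ b : C, b < a → ∀ i ∈ D, ∃ j ∈ D, i ≤ j ∧ b < f j := by
    intro b hb i hi
    have : b < sSup (f '' {j ∈ D | i ≤ j}) := lt_of_lt_of_le hb (htail i hi)
    obtain ⟨y, hy, hby⟩ := lt_sSup_iff.mp this
    obtain ⟨j, hj, rfl⟩ := hy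
    exact ⟨j, hj.1, hj.2, hby⟩
  -- choose level b
  by_cases hex : ∃ b : C, c < b ∧ b < a
  · obtain ⟨b, hcb, hba⟩ := hex
    set D' := {j ∈ D | b ≤ f j} with hD'
    have hsub : D' ⊆ D := fun j hj => hj.1
    have hcof : ∀ i ∈ D, ∃ j ∈ D', i ≤ j := by
      intro i hi
      obtain ⟨j, hj, hij, hbj⟩ := hwit b hba i hi
      exact ⟨j, ⟨hj, le_of_lt hbj⟩, hij⟩
    have hne' : D'.Nonempty := by
      obtain ⟨i, hi⟩ := hne
      obtain ⟨j, hj, _⟩ := hcof i hi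
      exact ⟨j, hj⟩
    have hsupeq : sSup D' = sSup D := by
      apply le_antisymm (sSup_le_sSup hsub)
      apply sSup_le
      intro i hi
      obtain ⟨j, hj, hij⟩ := hcof i hi
      exact le_trans hij (le_sSup hj)
    have := h b D' (fun j hj => hj.2) hne' (hch.mono hsub)
    rw [hsupeq] at this
    exact absurd this (not_le.mpr hcb)
  · push_neg at hex
    set D' := {j ∈ D | a ≤ f j} with hD'
    have hsub : D' ⊆ D := fun j hj => hj.1
    have hcof : ∀ i ∈ D, ∃ j ∈ D', i ≤ j := by
      intro i hi
      obtain ⟨j, hj, hij, hbj⟩ := hwit c hc i hi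
      have : a ≤ f j := by
        by_contra hfa
        exact absurd (hex (f j) hbj) (not_le.mpr (not_le.mp hfa))
      exact ⟨j, ⟨hj, this⟩, hij⟩
    have hne' : D'.Nonempty := by
      obtain ⟨i, hi⟩ := hne
      obtain ⟨j, hj, _⟩ := hcof i hi
      exact ⟨j, hj⟩
    have hsupeq : sSup D' = sSup D := by
      apply le_antisymm (sSup_le_sSup hsub)
      apply sSup_le
      intro i hi
      obtain ⟨j, hj, hij⟩ := hcof i hi
      exact le_trans hij (le_sSup hj)
    have := h a D' (fun j hj => hj.2) hne' (hch.mono hsub)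
    rw [hsupeq] at this
    exact absurd this (not_le.mpr hc)

/-- A function from a complete lattice to a complete chain is order upper
semicontinuous (upward and downward upper semicontinuous, via limit superior
along the nets given by nonempty chains) if and only if it is upper chain
subcomplete (each superlevel set is closed under sups and infs of nonempty
chains). -/
theorem orderUSC_iff_upperChainSubcomplete
    {L : Type*} [CompleteLattice L] {C : Type*} [CompleteLinearOrder C]
    (f : L → C) :
    ((∀ D : Set L, D.Nonempty → IsChain (· ≤ ·) D →
        sInf ((fun i => sSup (f '' {j ∈ D | i ≤ j})) '' D) ≤ f (sSup D)) ∧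
     (∀ D : Set L, D.Nonempty → IsChain (· ≤ ·) D →
        sInf ((fun i => sSup (f '' {j ∈ D | j ≤ i})) '' D) ≤ f (sInf D))) ↔
    (∀ a : C, ∀ D : Set L, D ⊆ {x | a ≤ f x} → D.Nonempty →
        IsChain (· ≤ ·) D → a ≤ f (sSup D) ∧ a ≤ f (sInf D)) := by
  constructor
  · rintro ⟨hs, hi⟩ a D hDa hne hch
    have key : ∀ i ∈ D, a ≤ f i := fun i hi => hDa hi
    constructor
    · refine le_trans ?_ (hs D hne hch)
      apply le_sInf
      rintro y ⟨i, hiD, rfl⟩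
      exact le_trans (key i hiD) (le_sSup ⟨i, ⟨hiD, le_refl i⟩, rfl⟩)
    · refine le_trans ?_ (hi D hne hch)
      apply le_sInf
      rintro y ⟨i, hiD, rfl⟩
      exact le_trans (key i hiD) (le_sSup ⟨i, ⟨hiD, le_refl i⟩, rfl⟩)
  · intro h
    constructor
    · exact aux_sup f (fun a D hDa hne hch => (h a D hDa hne hch).1)
    · intro D hne hch
      exact aux_sup (L := Lᵒᵈ) f
        (fun a D' hDa hne' hch' => (h a D' hDa hne' hch'.symm).2) D hne hch.symm
end

section
/- Let f : L → C be a function from a complete lattice L to a chain C that is upper semicontinuous in the interval topology of L (i.e., {x ∈ L : f(x) ≥ a} is closed in the interval topology for every a ∈ C). Then f is upper chain subcomplete: for every a ∈ C and every nonempty chain D ⊆ {x : f(x) ≥ a}, both sup_L(D) and inf_L(D) satisfy f ≥ a. -/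
lemma aux_sup_s7 {L : Type*} [CompleteLattice L] {D : Set L} (hne : D.Nonempty)
    (hch : IsChain (· ≤ ·) D) {U : Set L}
    (hU : TopologicalSpace.GenerateOpen {s | ∃ a : L, s = (Set.Ici a)ᶜ ∨ s = (Set.Iic a)ᶜ} U) :
    sSup D ∈ U → ∃ d ∈ D, ∀ e ∈ D, d ≤ e → e ∈ U := by
  induction hU with
  | basic s hs =>
      intro hmem
      obtain ⟨a, rfl | rfl⟩ := hs
      · obtain ⟨d, hd⟩ := hne
        exact ⟨d, hd, fun e he _ hae => hmem (le_trans hae (le_sSup he))⟩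
      · by_contra h
        push_neg at h
        refine hmem (sSup_le fun d hd => ?_)
        obtain ⟨e, he, hde, heU⟩ := h d hd
        by_contra hda
        exact heU fun h' => hda (le_trans hde h')
  | univ =>
      intro _
      obtain ⟨d, hd⟩ := hne
      exact ⟨d, hd, fun e he _ => trivial⟩
  | inter s t _ _ ih1 ih2 =>
      intro hmem
      obtain ⟨d1, hd1, h1⟩ := ih1 hmem.1
      obtain ⟨d2, hd2, h2⟩ := ih2 hmem.2
      rcases eq_or_ne d1 d2 with rfl | hne12
      · exact ⟨d1, hd1, fun e he hle => ⟨h1 e he hle, h2 e he hle⟩⟩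
      · rcases hch hd1 hd2 hne12 with h | h
        · exact ⟨d2, hd2, fun e he hle => ⟨h1 e he (h.trans hle), h2 e he hle⟩⟩
        · exact ⟨d1, hd1, fun e he hle => ⟨h1 e he hle, h2 e he (h.trans hle)⟩⟩
  | sUnion S _ ih =>
      intro hmem
      obtain ⟨t, ht, hmt⟩ := hmem
      obtain ⟨d, hd, h⟩ := ih t ht hmt
      exact ⟨d, hd, fun e he hle => ⟨t, ht, h e he hle⟩⟩

lemma aux_inf {L : Type*} [CompleteLattice L] {D : Set L} (hne : D.Nonempty)
    (hch : IsChain (· ≤ ·) D) {U : Set L}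
    (hU : TopologicalSpace.GenerateOpen {s | ∃ a : L, s = (Set.Ici a)ᶜ ∨ s = (Set.Iic a)ᶜ} U) :
    sInf D ∈ U → ∃ d ∈ D, ∀ e ∈ D, e ≤ d → e ∈ U := by
  induction hU with
  | basic s hs =>
      intro hmem
      obtain ⟨a, rfl | rfl⟩ := hs
      · by_contra h
        push_neg at h
        refine hmem (le_sInf fun d hd => ?_)
        obtain ⟨e, he, hed, heU⟩ := h d hd
        by_contra hda
        exact heU fun h' => hda (le_trans h' hed)
      · obtain ⟨d, hd⟩ := hne
        exact ⟨d, hd, fun e he hed hae => hmem (le_trans (sInf_le he) hae)⟩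
  | univ =>
      intro _
      obtain ⟨d, hd⟩ := hne
      exact ⟨d, hd, fun e he _ => trivial⟩
  | inter s t _ _ ih1 ih2 =>
      intro hmem
      obtain ⟨d1, hd1, h1⟩ := ih1 hmem.1
      obtain ⟨d2, hd2, h2⟩ := ih2 hmem.2
      rcases eq_or_ne d1 d2 with rfl | hne12
      · exact ⟨d1, hd1, fun e he hle => ⟨h1 e he hle, h2 e he hle⟩⟩
      · rcases hch hd1 hd2 hne12 with h | h
        · exact ⟨d1, hd1, fun e he hle => ⟨h1 e he hle, h2 e he (hle.trans h)⟩⟩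
        · exact ⟨d2, hd2, fun e he hle => ⟨h1 e he (hle.trans h), h2 e he hle⟩⟩
  | sUnion S _ ih =>
      intro hmem
      obtain ⟨t, ht, hmt⟩ := hmem
      obtain ⟨d, hd, h⟩ := ih t ht hmt
      exact ⟨d, hd, fun e he hle => ⟨t, ht, h e he hle⟩⟩

/-- A function from a complete lattice to a chain that is upper semicontinuous
in the interval topology is upper chain subcomplete. -/
theorem topologicallyUSC_upperChainSubcomplete
    {L : Type*} [CompleteLattice L] {C : Type*} [LinearOrder C]
    (f : L → C)
    (husc : ∀ a : C, @IsClosed L (intervalTopology L) {x | a ≤ f x}) :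
    ∀ a : C, ∀ D : Set L, D ⊆ {x | a ≤ f x} → D.Nonempty →
      IsChain (· ≤ ·) D → a ≤ f (sSup D) ∧ a ≤ f (sInf D) := by
  intro a D hD hne hch
  have hopen : TopologicalSpace.GenerateOpen
      {s | ∃ b : L, s = (Set.Ici b)ᶜ ∨ s = (Set.Iic b)ᶜ} {x | a ≤ f x}ᶜ :=
    (husc a).isOpen_compl
  constructor
  · by_contra h
    obtain ⟨d, hd, hall⟩ := aux_sup_s7 hne hch hopen h
    exact hall d hd le_rfl (hD hd)
  · by_contra h
    obtain ⟨d, hd, hall⟩ := aux_inf hne hch hopen h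
    exact hall d hd le_rfl (hD hd)
end

section
/- Let X be a compact (not necessarily Hausdorff) topological space and f : X → ℝ a transfer upper continuous function. Then argmax f (the set of global maximizers of f) is a nonempty closed subset of X, hence compact. -/
/-- (Tian–Zhou) On a nonempty compact (not necessarily Hausdorff) topological
space, a transfer upper continuous real-valued function attains its maximum,
and the set of maximizers is closed, hence compact. -/
theorem argmax_transferUpperContinuous_nonempty_closed_compact
    {X : Type*} [TopologicalSpace X] [CompactSpace X] [Nonempty X]
    (f : X → ℝ)
    (htuc : ∀ x y : X, f y < f x → ∃ x' : X, ∃ U : Set X,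
      IsOpen U ∧ y ∈ U ∧ ∀ z ∈ U, f z < f x') :
    ({x : X | ∀ y : X, f y ≤ f x}.Nonempty ∧
     IsClosed {x : X | ∀ y : X, f y ≤ f x}) ∧
    IsCompact {x : X | ∀ y : X, f y ≤ f x} := by
  classical
  set A : Set X := {x : X | ∀ y : X, f y ≤ f x} with hA
  have hclosed : IsClosed A := by
    rw [← isOpen_compl_iff]
    rw [isOpen_iff_forall_mem_open]
    intro x hx
    simp only [Set.mem_compl_iff, hA, Set.mem_setOf_eq, not_forall, not_le] at hx
    obtain ⟨y, hy⟩ := hx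
    obtain ⟨x', U, hU, hxU, hlt⟩ := htuc y x hy
    exact ⟨U, fun z hz hzA => absurd (hzA x') (not_le.2 (hlt z hz)), hU, hxU⟩
  have hne : A.Nonempty := by
    by_contra hemp
    rw [Set.not_nonempty_iff_eq_empty] at hemp
    -- for each y, there is a better point
    have hbetter : ∀ y : X, ∃ x : X, f y < f x := by
      intro y
      by_contra h
      push_neg at h
      have : y ∈ A := fun z => h z
      simp [hemp] at this
    choose g hg using hbetter
    choose p U hUopen hmem hlt using fun y => htuc (g y) y (hg y)
    have hcover : Set.univ ⊆ ⋃ y : X, U y := fun y _ =>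
      Set.mem_iUnion.2 ⟨y, hmem y⟩
    obtain ⟨t, ht⟩ := isCompact_univ.elim_finite_subcover U hUopen hcover
    have htne : t.Nonempty := by
      rcases t.eq_empty_or_nonempty with h | h
      · exfalso
        have := ht (Set.mem_univ (Classical.arbitrary X))
        simp [h] at this
      · exact h
    obtain ⟨i, hi, hmax⟩ := t.exists_max_image (fun y => f (p y)) htne
    have := ht (Set.mem_univ (p i))
    simp only [Set.mem_iUnion, Finset.mem_coe] at this
    obtain ⟨j, hj, hpj⟩ := this
    exact absurd (hmax j hj) (not_le.2 (hlt j (p i) hpj))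
  exact ⟨⟨hne, hclosed⟩, hclosed.isCompact⟩
end

section
/- Let f : L → C be an upper chain subcomplete function from a complete lattice L to a chain C. If argmax f is a nonempty sublattice of L, then argmax f is subcomplete in L: for every nonempty subset A of argmax f, both sup_L(A) and inf_L(A) lie in argmax f. -/
theorem aux_sup_s10
    {L : Type*} [CompleteLattice L] {C : Type*} [LinearOrder C] (f : L → C)
    (hucs : ∀ a : C, ∀ D : Set L, D ⊆ {x | a ≤ f x} → D.Nonempty →
      IsChain (· ≤ ·) D → a ≤ f (sSup D))
    (hsup : ∀ u ∈ {x : L | ∀ y : L, f y ≤ f x},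
      ∀ v ∈ {x : L | ∀ y : L, f y ≤ f x},
      u ⊔ v ∈ {x : L | ∀ y : L, f y ≤ f x}) :
    ∀ A : Set L, A ⊆ {x : L | ∀ y : L, f y ≤ f x} → A.Nonempty →
      sSup A ∈ {x : L | ∀ y : L, f y ≤ f x} := by
  intro A hA ⟨x0, hx0⟩
  have hx0S : x0 ∈ {x : L | ∀ y : L, f y ≤ f x} := hA hx0
  set a := f x0 with ha
  set Z : Set L := {x | a ≤ f x ∧ x ≤ sSup A} with hZ
  have hAZ : A ⊆ Z := fun x hx => ⟨hA hx x0, le_sSup hx⟩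
  have hx0Z : x0 ∈ Z := hAZ hx0
  obtain ⟨m, hx0m, hmZ, hmax⟩ := zorn_le_nonempty₀ Z (fun c hc hchain y hy => by
    refine ⟨sSup c, ⟨hucs a c (fun z hz => (hc hz).1) ⟨y, hy⟩ hchain,
      sSup_le fun z hz => (hc hz).2⟩, fun z hz => le_sSup hz⟩) x0 hx0Z
  have hmS : m ∈ {x : L | ∀ y : L, f y ≤ f x} := fun y => (hx0S y).trans hmZ.1
  have hub : ∀ x ∈ A, x ≤ m := by
    intro x hx
    have hxm : x ⊔ m ∈ Z := ⟨hsup x (hA hx) m hmS x0, sup_le (le_sSup hx) hmZ.2⟩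
    have := hmax hxm le_sup_right
    calc x ≤ x ⊔ m := le_sup_left
    _ ≤ m := this
  have : sSup A = m := le_antisymm (sSup_le hub) hmZ.2
  rw [this]; exact hmS

/-- If `f` is an upper chain subcomplete function from a complete lattice to a
chain, and `argmax f` is a nonempty sublattice, then `argmax f` is subcomplete:
every nonempty subset of `argmax f` has its sup and inf (taken in `L`) inside
`argmax f`. -/
theorem argmax_subcomplete_of_upperChainSubcomplete
    {L : Type*} [CompleteLattice L] {C : Type*} [LinearOrder C] (f : L → C)
    (hucs : ∀ a : C, ∀ D : Set L, D ⊆ {x | a ≤ f x} → D.Nonempty →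
      IsChain (· ≤ ·) D → a ≤ f (sSup D) ∧ a ≤ f (sInf D))
    (hne : {x : L | ∀ y : L, f y ≤ f x}.Nonempty)
    (hsublat : ∀ u ∈ {x : L | ∀ y : L, f y ≤ f x},
      ∀ v ∈ {x : L | ∀ y : L, f y ≤ f x},
      u ⊓ v ∈ {x : L | ∀ y : L, f y ≤ f x} ∧
      u ⊔ v ∈ {x : L | ∀ y : L, f y ≤ f x}) :
    ∀ A : Set L, A ⊆ {x : L | ∀ y : L, f y ≤ f x} → A.Nonempty →
      sSup A ∈ {x : L | ∀ y : L, f y ≤ f x} ∧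
      sInf A ∈ {x : L | ∀ y : L, f y ≤ f x} := by
  intro A hA hAne
  constructor
  · exact aux_sup_s10 f (fun a D hD hne hc => (hucs a D hD hne hc).1)
      (fun u hu v hv => (hsublat u hu v hv).2) A hA hAne
  · exact aux_sup_s10 (L := Lᵒᵈ) (fun x => f (OrderDual.ofDual x))
      (fun a D hD hne hc => (hucs a (OrderDual.toDual ⁻¹' D)
        (fun z hz => hD hz)
        (hne.preimage (Equiv.surjective _))
        (fun p hp q hq hpq => (hc hp hq hpq).symm.imp id id)).2)
      (fun u hu v hv => (hsublat u hu v hv).1) A hA hAne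
end

section
/- Let f : L → C be a quasisupermodular function from a lattice L to a chain C. Then argmax f is a sublattice of L: if u and v are both global maximizers of f, then so are u ∧ v and u ∨ v. -/
/-- For a quasisupermodular function from a lattice to a chain, the set of
global maximizers is a sublattice. -/
theorem argmax_sublattice_of_quasiSupermodular
    {L : Type*} [Lattice L] {C : Type*} [LinearOrder C] (f : L → C)
    (hqsm : ∀ x y : L, (f (x ⊓ y) ≤ f x → f y ≤ f (x ⊔ y)) ∧
      (f (x ⊓ y) < f x → f y < f (x ⊔ y)))
    (u v : L) (hu : ∀ z : L, f z ≤ f u) (hv : ∀ z : L, f z ≤ f v) :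
    (∀ z : L, f z ≤ f (u ⊓ v)) ∧ (∀ z : L, f z ≤ f (u ⊔ v)) := by
  have hsup : f v ≤ f (u ⊔ v) := (hqsm u v).1 (hu _)
  have hinf : f u ≤ f (u ⊓ v) := by
    by_contra h
    exact absurd ((hqsm u v).2 (lt_of_not_ge h)).not_ge (not_not.2 (hv _))
  exact ⟨fun z => (hu z).trans hinf, fun z => (hv z).trans hsup⟩
end

section
/- Let f : L → C be a quasisupermodular, upper chain subcomplete function from a complete lattice L to a chain C. Then argmax f is a nonempty subcomplete sublattice of L. -/
/-- Zorn's lemma for a transitive relation restricted to a set. -/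
private lemma zornRel {α : Type*} (r : α → α → Prop)
    (htrans : ∀ {a b c}, r a b → r b c → r a c)
    (S : Set α) (hne : S.Nonempty)
    (hchain : ∀ c ⊆ S, c.Nonempty → IsChain r c → ∃ ub ∈ S, ∀ a ∈ c, r a ub) :
    ∃ m ∈ S, ∀ a ∈ S, r m a → r a m := by
  have : Nonempty S := hne.to_subtype
  obtain ⟨m, hm⟩ := exists_maximal_of_nonempty_chains_bounded
    (r := fun a b : S => r a b)
    (fun c hc hcne => by
      obtain ⟨ub, hubS, hub⟩ := hchain (Subtype.val '' c)
        (by rintro _ ⟨a, _, rfl⟩; exact a.2)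
        (hcne.image _)
        (by
          rintro _ ⟨a, hac, rfl⟩ _ ⟨b, hbc, rfl⟩ hne'
          exact hc hac hbc (fun h => hne' (by rw [h])))
      exact ⟨⟨ub, hubS⟩, fun a ha => hub a.1 ⟨a, ha, rfl⟩⟩)
    (fun hab hbc => htrans hab hbc)
  exact ⟨m.1, m.2, fun a ha har => hm ⟨a, ha⟩ har⟩

/-- In the interval `[⊥, t]`, above any `w ≤ t` there is a relatively
up-maximal point. Uses the `sSup` half of upper chain subcompleteness. -/
private lemma exists_relmax {L C : Type*} [CompleteLattice L] [LinearOrder C] (f : L → C)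
    (hucs : ∀ a : C, ∀ D : Set L, D ⊆ {x | a ≤ f x} → D.Nonempty →
      IsChain (· ≤ ·) D → a ≤ f (sSup D) ∧ a ≤ f (sInf D))
    (t w : L) (hwt : w ≤ t) :
    ∃ x, x ≤ t ∧ w ≤ x ∧ f w ≤ f x ∧ ∀ y, y ≤ t → x ≤ y → f y ≤ f x := by
  set S : Set L := {x | w ≤ x ∧ x ≤ t ∧ f w ≤ f x} with hSdef
  have hwS : w ∈ S := ⟨le_rfl, hwt, le_rfl⟩
  have hbdd : ∀ c ⊆ S, c.Nonempty → IsChain (fun a b : L => a ≤ b ∧ f a ≤ f b) c →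
      ∃ ub ∈ S, ∀ a ∈ c, a ≤ ub ∧ f a ≤ f ub := by
    intro c hcS hcne hc
    have key : ∀ x ∈ c, f x ≤ f (sSup c) := by
      intro x hxc
      set D : Set L := {d ∈ c | x ≤ d ∧ f x ≤ f d} with hDdef
      have hDsub : D ⊆ {z | f x ≤ f z} := fun d hd => hd.2.2
      have hDne : D.Nonempty := ⟨x, hxc, le_rfl, le_rfl⟩
      have hDchain : IsChain (· ≤ ·) D := by
        intro a ha b hb hab
        rcases hc ha.1 hb.1 hab with h | h
        · exact Or.inl h.1
        · exact Or.inr h.1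
      have hsup : sSup D = sSup c := by
        apply le_antisymm (sSup_le_sSup fun d hd => hd.1)
        apply sSup_le
        intro d hd
        rcases eq_or_ne d x with rfl | hne
        · exact le_sSup ⟨hxc, le_rfl, le_rfl⟩
        · rcases hc hd hxc hne with h | h
          · exact h.1.trans (le_sSup ⟨hxc, le_rfl, le_rfl⟩)
          · exact le_sSup ⟨hd, h.1, h.2⟩
      have := (hucs (f x) D hDsub hDne hDchain).1
      rwa [hsup] at this
    obtain ⟨x₀, hx₀⟩ := hcne
    refine ⟨sSup c, ⟨(hcS hx₀).1.trans (le_sSup hx₀),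
      sSup_le fun x hx => (hcS hx).2.1,
      (hcS hx₀).2.2.trans (key x₀ hx₀)⟩, fun a ha => ⟨le_sSup ha, key a ha⟩⟩
  obtain ⟨m, hmS, hmax⟩ := zornRel (fun a b : L => a ≤ b ∧ f a ≤ f b)
    (fun h1 h2 => ⟨h1.1.trans h2.1, h1.2.trans h2.2⟩) S ⟨w, hwS⟩ hbdd
  refine ⟨m, hmS.2.1, hmS.1, hmS.2.2, fun y hyt hmy => ?_⟩
  by_contra h
  push_neg at h
  have hyS : y ∈ S := ⟨hmS.1.trans hmy, hyt, hmS.2.2.trans h.le⟩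
  exact absurd (hmax y hyS ⟨hmy, h.le⟩).2 (not_le.mpr h)

/-- For a quasisupermodular, upper chain subcomplete function from a complete
lattice to a chain, the set of global maximizers is a nonempty subcomplete
sublattice. -/
theorem argmax_nonempty_subcomplete_sublattice
    {L : Type*} [CompleteLattice L] {C : Type*} [LinearOrder C] (f : L → C)
    (hqsm : ∀ x y : L, (f (x ⊓ y) ≤ f x → f y ≤ f (x ⊔ y)) ∧
      (f (x ⊓ y) < f x → f y < f (x ⊔ y)))
    (hucs : ∀ a : C, ∀ D : Set L, D ⊆ {x | a ≤ f x} → D.Nonempty →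
      IsChain (· ≤ ·) D → a ≤ f (sSup D) ∧ a ≤ f (sInf D)) :
    {x : L | ∀ y : L, f y ≤ f x}.Nonempty ∧
    (∀ u ∈ {x : L | ∀ y : L, f y ≤ f x}, ∀ v ∈ {x : L | ∀ y : L, f y ≤ f x},
      u ⊓ v ∈ {x : L | ∀ y : L, f y ≤ f x} ∧
      u ⊔ v ∈ {x : L | ∀ y : L, f y ≤ f x}) ∧
    (∀ A : Set L, A ⊆ {x : L | ∀ y : L, f y ≤ f x} → A.Nonempty →
      sSup A ∈ {x : L | ∀ y : L, f y ≤ f x} ∧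
      sInf A ∈ {x : L | ∀ y : L, f y ≤ f x}) := by
  set M : Set L := {x : L | ∀ y : L, f y ≤ f x} with hMdef
  -- P : globally up-maximal points
  set P : Set L := {x : L | ∀ y, x ≤ y → f y ≤ f x} with hPdef
  have hPne : P.Nonempty := by
    obtain ⟨x, _, _, _, hx⟩ := exists_relmax f hucs ⊤ ⊥ le_top
    exact ⟨x, fun y hxy => hx y le_top hxy⟩
  -- Key fact: meeting with an up-maximal point does not decrease f
  have key : ∀ p ∈ P, ∀ y : L, f y ≤ f (y ⊓ p) := by
    intro p hp y
    by_contra h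
    push_neg at h
    exact absurd ((hqsm y p).2 h) (not_lt.mpr (hp _ le_sup_right))
  -- Refinement: up-maximal points below a member of P, above any w ≤ p
  have refine_ : ∀ p ∈ P, ∀ w, w ≤ p → ∃ p' ∈ P, p' ≤ p ∧ f w ≤ f p' := by
    intro p hp w hwp
    obtain ⟨x, hxp, _, hfwx, hmaxrel⟩ := exists_relmax f hucs p w hwp
    refine ⟨x, ?_, hxp, hfwx⟩
    intro y hxy
    exact (key p hp y).trans (hmaxrel (y ⊓ p) inf_le_right (le_inf hxy hxp))
  -- Downward Zorn on P : existence of a global maximizer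
  have hbdd : ∀ c ⊆ P, c.Nonempty → IsChain (fun a b : L => b ≤ a ∧ f a ≤ f b) c →
      ∃ ub ∈ P, ∀ a ∈ c, ub ≤ a ∧ f a ≤ f ub := by
    intro c hcP hcne hc
    have hchainle : IsChain (· ≤ ·) c := fun a ha b hb hab =>
      (hc hb ha (Ne.symm hab)).elim (fun h => Or.inl h.1) (fun h => Or.inr h.1)
    have hinfP : sInf c ∈ P := by
      intro y hy
      set W : Set L := (fun d => d ⊓ y) '' c with hWdef
      have hWsub : W ⊆ {u | f y ≤ f u} := by
        rintro _ ⟨d, hd, rfl⟩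
        have := key d (hcP hd) y
        rwa [inf_comm] at this
      have hWne : W.Nonempty := hcne.image _
      have hWchain : IsChain (· ≤ ·) W := by
        rintro _ ⟨a, ha, rfl⟩ _ ⟨b, hb, rfl⟩ hab
        rcases eq_or_ne a b with rfl | hne
        · exact absurd rfl hab
        · rcases hchainle ha hb hne with h | h
          · exact Or.inl (inf_le_inf_right y h)
          · exact Or.inr (inf_le_inf_right y h)
      have hinfW : sInf W = sInf c := by
        apply le_antisymm
        · refine le_sInf fun d hd => le_trans (sInf_le ?_) (inf_le_left (b := y))
          exact ⟨d, hd, rfl⟩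
        · refine le_sInf ?_
          rintro _ ⟨d, hd, rfl⟩
          exact le_inf (sInf_le hd) hy
      have := (hucs (f y) W hWsub hWne hWchain).2
      rwa [hinfW] at this
    exact ⟨sInf c, hinfP, fun a ha => ⟨sInf_le ha, hinfP a (sInf_le ha)⟩⟩
  obtain ⟨q, hqP, hqmax⟩ := zornRel (fun a b : L => b ≤ a ∧ f a ≤ f b)
    (fun h1 h2 => ⟨h2.1.trans h1.1, h1.2.trans h2.2⟩) P hPne hbdd
  have hqmaxglobal : q ∈ M := by
    intro y
    by_contra h
    push_neg at h
    obtain ⟨p', hp'P, hp'q, hfp'⟩ := refine_ q hqP (y ⊓ q) inf_le_right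
    have hfq : f q ≤ f p' := (h.le.trans (key q hqP y)).trans hfp'
    have := (hqmax p' hp'P ⟨hp'q, hfq⟩).2
    exact absurd (h.trans_le ((key q hqP y).trans hfp')) (not_lt.mpr this)
  -- Part 2 : sublattice
  have part2 : ∀ u ∈ M, ∀ v ∈ M, u ⊓ v ∈ M ∧ u ⊔ v ∈ M := by
    intro u hu v hv
    have hmeet : f u ≤ f (u ⊓ v) := by
      by_contra h
      push_neg at h
      exact absurd ((hqsm u v).2 h) (not_lt.mpr (hv _))
    have hjoin : f v ≤ f (u ⊔ v) := (hqsm u v).1 (hu _)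
    exact ⟨fun y => (hu y).trans hmeet, fun y => (hv y).trans hjoin⟩
  refine ⟨⟨q, hqmaxglobal⟩, part2, ?_⟩
  -- Part 3 : subcompleteness
  intro A hA hAne
  obtain ⟨a₀, ha₀⟩ := hAne
  have ha₀M : a₀ ∈ M := hA ha₀
  have hMiff : ∀ x : L, f a₀ ≤ f x → x ∈ M := fun x hx y => (ha₀M y).trans hx
  constructor
  · -- sSup
    set S : Set L := {x | f a₀ ≤ f x ∧ x ≤ sSup A} with hSdef
    have ha₀S : a₀ ∈ S := ⟨le_rfl, le_sSup ha₀⟩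
    obtain ⟨z, hzS, hzmax⟩ := zornRel (fun a b : L => a ≤ b)
      (fun h1 h2 => h1.trans h2) S ⟨a₀, ha₀S⟩
      (by
        intro c hcS hcne hc
        refine ⟨sSup c, ⟨(hucs (f a₀) c (fun x hx => (hcS hx).1) hcne hc).1,
          sSup_le fun x hx => (hcS hx).2⟩, fun a ha => le_sSup ha⟩)
    have hub : ∀ a ∈ A, a ≤ z := by
      intro a ha
      have haM : a ∈ M := hA ha
      have hzM : z ∈ M := hMiff z hzS.1
      have hjoin : z ⊔ a ∈ M := (part2 z hzM a haM).2
      have hjS : z ⊔ a ∈ S := ⟨hjoin a₀, sup_le hzS.2 (le_sSup ha)⟩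
      exact le_sup_right.trans (hzmax _ hjS le_sup_left)
    have hz : z = sSup A := le_antisymm hzS.2 (sSup_le hub)
    exact hz ▸ hMiff z hzS.1
  · -- sInf
    set S : Set L := {x | f a₀ ≤ f x ∧ sInf A ≤ x} with hSdef
    have ha₀S : a₀ ∈ S := ⟨le_rfl, sInf_le ha₀⟩
    obtain ⟨z, hzS, hzmax⟩ := zornRel (fun a b : L => b ≤ a)
      (fun h1 h2 => h2.trans h1) S ⟨a₀, ha₀S⟩
      (by
        intro c hcS hcne hc
        have hc' : IsChain (· ≤ ·) c := fun a ha b hb hab =>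
          (hc hb ha (Ne.symm hab)).elim Or.inl Or.inr
        refine ⟨sInf c, ⟨(hucs (f a₀) c (fun x hx => (hcS hx).1) hcne hc').2,
          le_sInf fun x hx => (hcS hx).2⟩, fun a ha => sInf_le ha⟩)
    have hlb : ∀ a ∈ A, z ≤ a := by
      intro a ha
      have haM : a ∈ M := hA ha
      have hzM : z ∈ M := hMiff z hzS.1
      have hmeet : z ⊓ a ∈ M := (part2 z hzM a haM).1
      have hmS : z ⊓ a ∈ S := ⟨hmeet a₀, le_inf hzS.2 (sInf_le ha)⟩
      exact (hzmax _ hmS inf_le_left).trans inf_le_right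
    have hz : z = sInf A := le_antisymm (le_sInf hlb) hzS.2
    exact hz ▸ hMiff z hzS.1
end

section
/- Let L, L' be lattices, C a chain, and f : L × L' → C a function such that for every chain D ⊆ L', the restriction of f to L × D is quasisupermodular (where L × D carries the product order and is a lattice since D is a chain). Then f satisfies the single crossing property relative to (L, L'), and for every t ∈ L', the function f(·, t) : L → C is quasisupermodular. -/
/-- If `f : L × L' → C` is quasisupermodular on `L × D` for every chain
`D ⊆ L'` (expressed elementwise: for `u, v ∈ D`, the lattice operations on
pairs are componentwise, with `u ⊓ v, u ⊔ v ∈ D` since `D` is a chain), then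
`f` satisfies the single crossing property relative to `(L, L')`, and
`f (·, t)` is quasisupermodular for every `t ∈ L'`. -/
theorem quasiSupermodular_on_chains_single_crossing
    {L L' : Type*} [Lattice L] [Lattice L'] {C : Type*} [LinearOrder C]
    (f : L → L' → C)
    (h : ∀ D : Set L', IsChain (· ≤ ·) D →
      ∀ (x y : L), ∀ u ∈ D, ∀ v ∈ D,
        (f (x ⊓ y) (u ⊓ v) ≤ f x u → f y v ≤ f (x ⊔ y) (u ⊔ v)) ∧
        (f (x ⊓ y) (u ⊓ v) < f x u → f y v < f (x ⊔ y) (u ⊔ v))) :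
    (∀ p p' : L, p ≤ p' → ∀ q q' : L', q ≤ q' →
      (f p q ≤ f p' q → f p q' ≤ f p' q') ∧
      (f p q < f p' q → f p q' < f p' q')) ∧
    (∀ t : L', ∀ x y : L,
      (f (x ⊓ y) t ≤ f x t → f y t ≤ f (x ⊔ y) t) ∧
      (f (x ⊓ y) t < f x t → f y t < f (x ⊔ y) t)) := by
  constructor
  · intro p p' hpp' q q' hqq'
    have hc : IsChain (· ≤ ·) ({q, q'} : Set L') := by
      intro a ha b hb hab
      rcases ha with rfl | ha <;> rcases hb with rfl | hb <;>
        simp_all <;> first | exact Or.inl hqq' | exact Or.inr hqq'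
    have := h {q, q'} hc p' p q (by simp) q' (by simp)
    simpa [inf_comm, sup_comm, inf_eq_left.mpr hpp', sup_eq_right.mpr hpp',
      inf_eq_left.mpr hqq', sup_eq_right.mpr hqq'] using this
  · intro t x y
    have hc : IsChain (· ≤ ·) ({t} : Set L') := Set.Subsingleton.isChain (by simp)
    have := h {t} hc x y t (by simp) t (by simp)
    simpa using this
end

section
/- Let L be a complete lattice and f : L → ℝ an upward upper semicontinuous function such that argmax f is nonempty. Then argmax f has a maximal element; moreover, if argmax f is a sublattice of L, this maximal element is the greatest element of argmax f. -/
/-- Let `f` be an upward upper semicontinuous real-valued function on a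
complete lattice whose set of maximizers is nonempty. Then `argmax f` has a
maximal element; moreover, if `argmax f` is a sublattice, this maximal element
is the greatest element of `argmax f`. -/
theorem argmax_maximal_of_upward_usc
    {L : Type*} [CompleteLattice L] (f : L → ℝ)
    (husc : ∀ D : Set L, D.Nonempty → IsChain (· ≤ ·) D →
      sInf ((fun i => sSup (f '' {j ∈ D | i ≤ j})) '' D) ≤ f (sSup D))
    (hne : {x : L | ∀ y : L, f y ≤ f x}.Nonempty) :
    (∃ m ∈ {x : L | ∀ y : L, f y ≤ f x},
      ∀ x ∈ {x : L | ∀ y : L, f y ≤ f x}, m ≤ x → x = m) ∧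
    ((∀ u ∈ {x : L | ∀ y : L, f y ≤ f x}, ∀ v ∈ {x : L | ∀ y : L, f y ≤ f x},
        u ⊓ v ∈ {x : L | ∀ y : L, f y ≤ f x} ∧
        u ⊔ v ∈ {x : L | ∀ y : L, f y ≤ f x}) →
      ∃ m, IsGreatest {x : L | ∀ y : L, f y ≤ f x} m) := by
  set S := {x : L | ∀ y : L, f y ≤ f x} with hS
  obtain ⟨x₀, hx₀⟩ := hne
  -- key: sup of a nonempty chain in S belongs to S
  have key : ∀ c ⊆ S, IsChain (· ≤ ·) c → c.Nonempty → sSup c ∈ S := by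
    intro c hcS hc ⟨a, ha⟩
    have haS : a ∈ S := hcS ha
    have himg : (fun i => sSup (f '' {j ∈ c | i ≤ j})) '' c = {f a} := by
      apply Set.eq_singleton_iff_nonempty_unique_mem.2
      constructor
      · exact ⟨_, ⟨a, ha, rfl⟩⟩
      · rintro _ ⟨i, hi, rfl⟩
        have hiS : i ∈ S := hcS hi
        have : f '' {j ∈ c | i ≤ j} = {f a} := by
          apply Set.eq_singleton_iff_nonempty_unique_mem.2
          refine ⟨⟨f i, i, ⟨hi, le_rfl⟩, rfl⟩, ?_⟩
          · rintro _ ⟨j, ⟨hj, _⟩, rfl⟩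
            exact le_antisymm (haS j) ((hcS hj) a)
        show sSup (f '' {j ∈ c | i ≤ j}) = f a
        rw [this, csSup_singleton]
    have h := husc c ⟨a, ha⟩ hc
    rw [himg, csInf_singleton] at h
    intro y
    exact (haS y).trans h
  have hzorn : ∃ m, x₀ ≤ m ∧ Maximal (· ∈ S) m := by
    apply zorn_le_nonempty₀ S _ x₀ hx₀
    intro c hcS hc y hy
    exact ⟨sSup c, key c hcS hc ⟨y, hy⟩, fun z hz => le_sSup hz⟩
  obtain ⟨m, _, hmS, hmax⟩ := hzorn
  refine ⟨⟨m, hmS, fun x hx hmx => le_antisymm (hmax hx hmx) hmx⟩, ?_⟩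
  intro hsub
  refine ⟨m, hmS, fun x hx => ?_⟩
  have h1 : m ⊔ x ∈ S := (hsub m hmS x hx).2
  have h2 : m ⊔ x ≤ m := hmax h1 le_sup_left
  exact le_sup_right.trans h2
end

section
/- Let L be a complete lattice whose interval topology is compact, and f : L → C an upper chain subcomplete function to a chain C such that argmax f is a nonempty sublattice of L. Then argmax f is compact in the interval topology of L. -/
private lemma zorn_min_aux {α : Type*} [PartialOrder α] (s : Set α)
    (ih : ∀ c ⊆ s, IsChain (· ≤ ·) c → ∀ y ∈ c, ∃ lb ∈ s, ∀ z ∈ c, lb ≤ z)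
    (x : α) (hxs : x ∈ s) : ∃ m ∈ s, ∀ z ∈ s, z ≤ m → m ≤ z := by
  obtain ⟨m, -, hm1, hm2⟩ :=
    zorn_le_nonempty₀ (α := αᵒᵈ) s (fun c hc hchainc y hy => by
      obtain ⟨lb, hlb, h⟩ := ih c hc hchainc.symm y hy
      exact ⟨lb, hlb, h⟩) x hxs
  exact ⟨m, hm1, fun z hz hzm => hm2 hz hzm⟩

/-- Let `L` be a complete lattice whose interval topology is compact and
`f : L → C` an upper chain subcomplete function to a chain such that
`argmax f` is a nonempty sublattice. Then `argmax f` is compact in the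
interval topology of `L`. -/
theorem argmax_compact_intervalTopology
    {L : Type*} [CompleteLattice L] {C : Type*} [LinearOrder C]
    (hcompact : @CompactSpace L (intervalTopology L))
    (f : L → C)
    (hucs : ∀ a : C, ∀ D : Set L, D ⊆ {x | a ≤ f x} → D.Nonempty →
      IsChain (· ≤ ·) D → a ≤ f (sSup D) ∧ a ≤ f (sInf D))
    (hne : {x : L | ∀ y : L, f y ≤ f x}.Nonempty)
    (hsublat : ∀ u ∈ {x : L | ∀ y : L, f y ≤ f x},
      ∀ v ∈ {x : L | ∀ y : L, f y ≤ f x},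
      u ⊓ v ∈ {x : L | ∀ y : L, f y ≤ f x} ∧
      u ⊔ v ∈ {x : L | ∀ y : L, f y ≤ f x}) :
    @IsCompact L (intervalTopology L) {x : L | ∀ y : L, f y ≤ f x} := by
  classical
  set S := {x : L | ∀ y : L, f y ≤ f x} with hSdef
  obtain ⟨x0, hx0⟩ := hne
  -- S is closed under sups and infs of nonempty chains
  have hchain : ∀ D : Set L, D ⊆ S → D.Nonempty → IsChain (· ≤ ·) D →
      sSup D ∈ S ∧ sInf D ∈ S := by
    intro D hD hDne hDc
    have hsub : D ⊆ {x | f x0 ≤ f x} := fun x hx => hD hx x0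
    obtain ⟨h1, h2⟩ := hucs (f x0) D hsub hDne hDc
    exact ⟨fun y => (hx0 y).trans h1, fun y => (hx0 y).trans h2⟩
  -- key finite intersection property step
  have key : ∀ A B : Set L,
      (∀ F : Finset L, ↑F ⊆ A → ∀ G : Finset L, ↑G ⊆ B →
        ∃ x ∈ S, (∀ a ∈ F, a ≤ x) ∧ (∀ b ∈ G, x ≤ b)) →
      ∃ x ∈ S, (∀ a ∈ A, a ≤ x) ∧ (∀ b ∈ B, x ≤ b) := by
    intro A B hFIP
    -- Step 1: for each finite G ⊆ B, find x ∈ S above all of A and below G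
    have step1 : ∀ G : Finset L, ↑G ⊆ B →
        ∃ x ∈ S, (∀ a ∈ A, a ≤ x) ∧ (∀ b ∈ G, x ≤ b) := by
      intro G hG
      set P := {x ∈ S | ∀ b ∈ G, x ≤ b} with hPdef
      obtain ⟨x1, hx1S, -, hx1G⟩ := hFIP ∅ (by simp) G hG
      have hx1P : x1 ∈ P := ⟨hx1S, hx1G⟩
      obtain ⟨m, -, hmP, hmmax⟩ := zorn_le_nonempty₀ P (fun c hc hchainc y hy => by
        refine ⟨sSup c, ⟨(hchain c (fun z hz => (hc hz).1) ⟨y, hy⟩ hchainc).1,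
          fun b hb => sSup_le fun z hz => (hc hz).2 b hb⟩, fun z hz => le_sSup hz⟩) x1 hx1P
      refine ⟨m, hmP.1, fun a ha => ?_, hmP.2⟩
      obtain ⟨x, hxS, hx1, hx2⟩ := hFIP {a} (by simpa using ha) G hG
      have hsup : m ⊔ x ∈ P :=
        ⟨(hsublat m hmP.1 x hxS).2, fun b hb => sup_le (hmP.2 b hb) (hx2 b hb)⟩
      have hle : m ⊔ x ≤ m := hmmax hsup le_sup_left
      exact le_trans (le_trans (hx1 a (Finset.mem_singleton_self a)) le_sup_right) hle
    -- Step 2: dualize over B using minimal element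
    set P' := {x ∈ S | ∀ a ∈ A, a ≤ x} with hP'def
    obtain ⟨x1, hx1S, hx1A, -⟩ := step1 ∅ (by simp)
    have hx1P' : x1 ∈ P' := ⟨hx1S, hx1A⟩
    obtain ⟨m, hmP, hmmin⟩ := zorn_min_aux P' (fun c hc hchainc y hy =>
      ⟨sInf c, ⟨(hchain c (fun z hz => (hc hz).1) ⟨y, hy⟩ hchainc).2,
        fun a ha => le_sInf fun z hz => (hc hz).2 a ha⟩, fun z hz => sInf_le hz⟩) x1 hx1P'
    refine ⟨m, hmP.1, hmP.2, fun b hb => ?_⟩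
    obtain ⟨y, hyS, hy1, hy2⟩ := step1 {b} (by simpa using hb)
    have hinf : m ⊓ y ∈ P' :=
      ⟨(hsublat m hmP.1 y hyS).1, fun a ha => le_inf (hmP.2 a ha) (hy1 a ha)⟩
    have hle : m ≤ m ⊓ y := hmmin _ hinf inf_le_left
    exact le_trans (le_trans hle inf_le_right) (hy2 b (Finset.mem_singleton_self b))
  -- now prove compactness via ultrafilters
  letI : TopologicalSpace L := intervalTopology L
  rw [isCompact_iff_ultrafilter_le_nhds]
  intro U hU
  have hSU : S ∈ U := hU (Filter.mem_principal_self S)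
  set A := {a : L | Set.Ici a ∈ U} with hAdef
  set B := {b : L | Set.Iic b ∈ U} with hBdef
  have hFIP : ∀ F : Finset L, ↑F ⊆ A → ∀ G : Finset L, ↑G ⊆ B →
      ∃ x ∈ S, (∀ a ∈ F, a ≤ x) ∧ (∀ b ∈ G, x ≤ b) := by
    intro F hF G hG
    have hT : (S ∩ ((⋂ a ∈ F, Set.Ici a) ∩ ⋂ b ∈ G, Set.Iic b)) ∈ U := by
      refine Filter.inter_mem hSU (Filter.inter_mem ?_ ?_)
      · exact (Filter.biInter_finset_mem F).2 fun a ha => hF ha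
      · exact (Filter.biInter_finset_mem G).2 fun b hb => hG hb
    obtain ⟨x, hxS, hx2⟩ := Ultrafilter.nonempty_of_mem hT
    simp only [Set.mem_inter_iff, Set.mem_iInter] at hx2
    exact ⟨x, hxS, fun a ha => hx2.1 a ha, fun b hb => hx2.2 b hb⟩
  obtain ⟨m, hmS, hmA, hmB⟩ := key A B hFIP
  refine ⟨m, hmS, ?_⟩
  show (U : Filter L) ≤ @nhds L (intervalTopology L) m
  rw [intervalTopology, TopologicalSpace.nhds_generateFrom]
  refine le_iInf₂ fun s hs => ?_
  obtain ⟨hms, a, rfl | rfl⟩ := hs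
  · rw [Filter.le_principal_iff]
    by_contra h
    have : Set.Ici a ∈ U := by
      have := (Ultrafilter.compl_mem_iff_notMem (s := (Set.Ici a)ᶜ)).2 h
      rwa [compl_compl] at this
    exact hms (hmA a this)
  · rw [Filter.le_principal_iff]
    by_contra h
    have : Set.Iic a ∈ U := by
      have := (Ultrafilter.compl_mem_iff_notMem (s := (Set.Iic a)ᶜ)).2 h
      rwa [compl_compl] at this
    exact hms (hmB a this)
end

section
/- There exists a complete lattice L and a supermodular, order upper semicontinuous function f : L → ℝ such that argmax f is not closed in the interval topology of L; in particular, f is not upper semicontinuous in the interval topology. Concretely: let X be an infinite antichain, L = X ∪ {m, M} with m < x < M for all x ∈ X, fix x₀ ∈ X, and let f(x) = 1 for x ≠ x₀ and f(x₀) = 0. -/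
open Classical in
noncomputable section

inductive FlatL (X : Type) where
  | bot : FlatL X
  | el : X → FlatL X
  | top : FlatL X

namespace FlatL

variable {X : Type}

protected def le : FlatL X → FlatL X → Prop
  | bot, _ => True
  | _, top => True
  | el x, el y => x = y
  | _, _ => False

instance : LE (FlatL X) := ⟨FlatL.le⟩

@[simp] lemma bot_le' (a : FlatL X) : bot ≤ a := by cases a <;> trivial
@[simp] lemma le_top' (a : FlatL X) : a ≤ top := by cases a <;> trivial
@[simp] lemma el_le_el {x y : X} : el x ≤ el y ↔ x = y := Iff.rfl
@[simp] lemma not_top_le_el (x : X) : ¬ (top : FlatL X) ≤ el x := fun h => h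
@[simp] lemma not_top_le_bot : ¬ (top : FlatL X) ≤ bot := fun h => h
@[simp] lemma not_el_le_bot (x : X) : ¬ (el x : FlatL X) ≤ bot := fun h => h

lemma le_el_iff {a : FlatL X} {x : X} : a ≤ el x ↔ a = bot ∨ a = el x := by
  cases a <;> simp [FlatL.le]

lemma el_le_iff {a : FlatL X} {x : X} : el x ≤ a ↔ a = el x ∨ a = top := by
  cases a <;> simp [FlatL.le, eq_comm]

lemma le_bot_iff' {a : FlatL X} : a ≤ bot ↔ a = bot := by
  cases a <;> simp
lemma top_le_iff' {a : FlatL X} : top ≤ a ↔ a = top := by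
  cases a <;> simp

instance : PartialOrder (FlatL X) where
  le_refl a := by cases a <;> trivial
  le_trans a b c hab hbc := by
    cases a <;> cases b <;> cases c <;> simp_all
  le_antisymm a b hab hba := by
    cases a <;> cases b <;> simp_all

open Classical in
noncomputable instance : SupSet (FlatL X) :=
  ⟨fun S =>
    if top ∈ S ∨ ∃ x y : X, x ≠ y ∧ el x ∈ S ∧ el y ∈ S then top
    else if h : ∃ x : X, el x ∈ S then el h.choose
    else bot⟩

lemma isLUB_sSup' (S : Set (FlatL X)) : IsLUB S (sSup S) := by
  show IsLUB S (if _ then _ else _)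
  split_ifs with h1 h2
  · constructor
    · intro a _; exact le_top' a
    · intro b hb
      rcases h1 with htop | ⟨x, y, hxy, hx, hy⟩
      · exact hb htop
      · have h1 := hb hx
        have h2 := hb hy
        cases b with
        | bot => simp_all
        | top => exact le_refl _
        | el z => simp_all
  · have hc : el h2.choose ∈ S := h2.choose_spec
    constructor
    · intro a ha
      cases a with
      | bot => exact bot_le' _
      | top => exact absurd (Or.inl ha) h1
      | el z =>
        by_cases hz : z = h2.choose
        · simp [hz]
        · exact absurd (Or.inr ⟨z, h2.choose, hz, ha, hc⟩) h1
    · intro b hb; exact hb hc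
  · constructor
    · intro a ha
      cases a with
      | bot => exact le_refl _
      | top => exact absurd (Or.inl ha) h1
      | el z => exact absurd ⟨z, ha⟩ h2
    · intro b _; exact bot_le' b

noncomputable instance : CompleteLattice (FlatL X) :=
  completeLatticeOfSup _ isLUB_sSup'

lemma bot_eq : (⊥ : FlatL X) = bot := le_antisymm bot_le (bot_le' _)
lemma top_eq : (⊤ : FlatL X) = top := le_antisymm (le_top' _) le_top


lemma incomp_cases {a b : FlatL X} (hab : ¬ a ≤ b) (hba : ¬ b ≤ a) :
    ∃ x y : X, x ≠ y ∧ a = el x ∧ b = el y := by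
  cases a with
  | bot => exact absurd (bot_le' b) hab
  | top => exact absurd (le_top' b) hba
  | el x =>
    cases b with
    | bot => exact absurd (bot_le' _) hba
    | top => exact absurd (le_top' _) hab
    | el y => exact ⟨x, y, fun h => hab (el_le_el.mpr h), rfl, rfl⟩

lemma inf_incomp {a b : FlatL X} (hab : ¬ a ≤ b) (hba : ¬ b ≤ a) : a ⊓ b = ⊥ := by
  obtain ⟨x, y, hxy, rfl, rfl⟩ := incomp_cases hab hba
  have h1 : el x ⊓ el y ≤ el x := inf_le_left
  rw [le_el_iff] at h1
  rcases h1 with h | h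
  · rw [h, bot_eq]
  · exfalso; exact hab (h ▸ inf_le_right)

lemma sup_incomp {a b : FlatL X} (hab : ¬ a ≤ b) (hba : ¬ b ≤ a) : a ⊔ b = ⊤ := by
  obtain ⟨x, y, hxy, rfl, rfl⟩ := incomp_cases hab hba
  have h1 : el x ≤ el x ⊔ el y := le_sup_left
  rw [el_le_iff] at h1
  rcases h1 with h | h
  · exfalso; exact hba (h ▸ le_sup_right)
  · rw [h, top_eq]

lemma chain_greatest {D : Set (FlatL X)} (hne : D.Nonempty) (hD : IsChain (· ≤ ·) D) :
    ∃ m ∈ D, ∀ j ∈ D, j ≤ m := by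
  by_cases htop : top ∈ D
  · exact ⟨top, htop, fun j _ => le_top' j⟩
  by_cases hel : ∃ x : X, el x ∈ D
  · obtain ⟨x, hx⟩ := hel
    refine ⟨el x, hx, fun j hj => ?_⟩
    cases j with
    | bot => exact bot_le' _
    | top => exact absurd hj htop
    | el z =>
      by_cases hzx : z = x
      · simp [hzx]
      · rcases hD hj hx (by simp [hzx]) with h | h
        · exact h
        · exact le_of_eq (congrArg el (el_le_el.mp h)).symm
  · obtain ⟨d, hd⟩ := hne
    cases d with
    | bot => exact ⟨bot, hd, fun j hj => by
        cases j with
        | bot => exact le_refl _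
        | top => exact absurd hj htop
        | el z => exact absurd ⟨z, hj⟩ hel⟩
    | top => exact absurd hd htop
    | el z => exact absurd ⟨z, hd⟩ hel

lemma chain_least {D : Set (FlatL X)} (hne : D.Nonempty) (hD : IsChain (· ≤ ·) D) :
    ∃ m ∈ D, ∀ j ∈ D, m ≤ j := by
  by_cases hbot : bot ∈ D
  · exact ⟨bot, hbot, fun j _ => bot_le' j⟩
  by_cases hel : ∃ x : X, el x ∈ D
  · obtain ⟨x, hx⟩ := hel
    refine ⟨el x, hx, fun j hj => ?_⟩
    cases j with
    | bot => exact absurd hj hbot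
    | top => exact le_top' _
    | el z =>
      by_cases hzx : z = x
      · simp [hzx]
      · rcases hD hx hj (fun h => hzx (congrArg (fun t => t) (el.injEq x z ▸ h : x = z)).symm) with h | h
        · exact h
        · exact le_of_eq (congrArg el (el_le_el.mp h)).symm
  · obtain ⟨d, hd⟩ := hne
    cases d with
    | top => exact ⟨top, hd, fun j hj => by
        cases j with
        | bot => exact absurd hj hbot
        | top => exact le_refl _
        | el z => exact absurd ⟨z, hj⟩ hel⟩
    | bot => exact absurd hd hbot
    | el z => exact absurd ⟨z, hd⟩ hel

end FlatL

namespace FlatL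

lemma cofinite_of_generateOpen {X : Type} {U : Set (FlatL X)}
    (hU : TopologicalSpace.GenerateOpen
      {s | ∃ a : FlatL X, s = (Set.Ici a)ᶜ ∨ s = (Set.Iic a)ᶜ} U)
    (x₀ : X) (hx : el x₀ ∈ U) : {x : X | el x ∉ U}.Finite := by
  induction hU with
  | basic s hs =>
    obtain ⟨a, rfl | rfl⟩ := hs
    · simp only [Set.mem_compl_iff, Set.mem_Ici] at hx
      cases a with
      | bot => exact absurd (bot_le' _) hx
      | top =>
        have : {x : X | el x ∉ (Set.Ici (top : FlatL X))ᶜ} = ∅ := by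
          ext x; simp [Set.mem_Ici, top_le_iff']
        rw [this]; exact Set.finite_empty
      | el y =>
        have : {x : X | el x ∉ (Set.Ici (el y : FlatL X))ᶜ} ⊆ {y} := by
          intro x hx'
          simp only [Set.mem_setOf_eq, Set.mem_compl_iff, Set.mem_Ici, not_not] at hx'
          simp [el_le_el.mp hx']
        exact (Set.finite_singleton y).subset this
    · simp only [Set.mem_compl_iff, Set.mem_Iic] at hx
      cases a with
      | top => exact absurd (le_top' _) hx
      | bot =>
        have : {x : X | el x ∉ (Set.Iic (bot : FlatL X))ᶜ} = ∅ := by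
          ext x; simp [Set.mem_Iic, le_bot_iff']
        rw [this]; exact Set.finite_empty
      | el y =>
        have : {x : X | el x ∉ (Set.Iic (el y : FlatL X))ᶜ} ⊆ {y} := by
          intro x hx'
          simp only [Set.mem_setOf_eq, Set.mem_compl_iff, Set.mem_Iic, not_not] at hx'
          simp [el_le_el.mp hx']
        exact (Set.finite_singleton y).subset this
  | univ => simp
  | inter s t _ _ ihs iht =>
    have : {x : X | el x ∉ s ∩ t} ⊆ {x | el x ∉ s} ∪ {x | el x ∉ t} := by
      intro x hx'
      simp only [Set.mem_setOf_eq, Set.mem_inter_iff, not_and] at hx'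
      by_cases h : el x ∈ s
      · exact Or.inr (hx' h)
      · exact Or.inl h
    exact ((ihs hx.1).union (iht hx.2)).subset this
  | sUnion S hS ih =>
    obtain ⟨t, ht, hxt⟩ := hx
    have : {x : X | el x ∉ ⋃₀ S} ⊆ {x | el x ∉ t} :=
      fun x hx' h => hx' ⟨t, ht, h⟩
    exact (ih t ht hxt).subset this

end FlatL


open FlatL in
/-- There is a complete lattice `L` and a supermodular, order upper
semicontinuous function `f : L → ℝ` such that `argmax f` is not closed in the
interval topology of `L`; in particular `f` is not upper semicontinuous in the
interval topology. Concretely, `L` is obtained from an infinite antichain `X`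
by adjoining a bottom and a top element, `f(x₀) = 0` for a fixed `x₀ ∈ X` and
`f = 1` elsewhere. -/
theorem supermodular_orderUSC_argmax_not_closed (X : Type) [Infinite X] :
    ∃ (L : Type) (_ : CompleteLattice L) (e : X → L) (x₀ : X) (f : L → ℝ),
      Function.Injective e ∧
      -- the image of `X` is an antichain strictly between the bottom and top
      (∀ x y : X, x ≠ y → ¬ e x ≤ e y) ∧
      (∀ x : X, ⊥ < e x ∧ e x < ⊤) ∧
      (∀ z : L, z = ⊥ ∨ z = ⊤ ∨ z ∈ Set.range e) ∧
      -- the function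
      (∀ z : L, z ≠ e x₀ → f z = 1) ∧ f (e x₀) = 0 ∧
      -- supermodular
      (∀ x y : L, f x + f y ≤ f (x ⊓ y) + f (x ⊔ y)) ∧
      -- order upper semicontinuous (upward and downward)
      (∀ D : Set L, D.Nonempty → IsChain (· ≤ ·) D →
        sInf ((fun i => sSup (f '' {j ∈ D | i ≤ j})) '' D) ≤ f (sSup D) ∧
        sInf ((fun i => sSup (f '' {j ∈ D | j ≤ i})) '' D) ≤ f (sInf D)) ∧
      -- argmax f is not closed in the interval topology
      ¬ @IsClosed L (intervalTopology L) {x : L | ∀ y : L, f y ≤ f x} ∧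
      -- f is not upper semicontinuous in the interval topology
      ¬ (∀ a : ℝ, @IsClosed L (intervalTopology L) {x : L | a ≤ f x}) := by
  classical
  obtain ⟨x₀⟩ : Nonempty X := inferInstance
  set f : FlatL X → ℝ := fun z => if z = el x₀ then 0 else 1 with hf
  have hf1 : ∀ z : FlatL X, z ≠ el x₀ → f z = 1 := fun z hz => if_neg hz
  have hf0 : f (el x₀) = 0 := if_pos rfl
  have hfle : ∀ z, f z ≤ 1 := fun z => by by_cases h : z = el x₀ <;> simp [hf, h]
  have hf0le : ∀ z, 0 ≤ f z := fun z => by by_cases h : z = el x₀ <;> simp [hf, h]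
  have hbotne : (⊥ : FlatL X) ≠ el x₀ := by rw [bot_eq]; simp
  have htopne : (⊤ : FlatL X) ≠ el x₀ := by rw [top_eq]; simp
  -- argmax is the complement of {el x₀}
  have hargmax : {x : FlatL X | ∀ y : FlatL X, f y ≤ f x} = {el x₀}ᶜ := by
    ext z
    simp only [Set.mem_setOf_eq, Set.mem_compl_iff, Set.mem_singleton_iff]
    constructor
    · intro h' hz
      have := h' ⊤
      rw [hz, hf0, hf1 ⊤ htopne] at this
      linarith
    · intro hz y
      rw [hf1 z hz]; exact hfle y
  have hnotclosed : ¬ @IsClosed (FlatL X) (intervalTopology (FlatL X))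
      {x : FlatL X | ∀ y : FlatL X, f y ≤ f x} := by
    intro h
    have hopen : @IsOpen (FlatL X) (intervalTopology (FlatL X)) {el x₀} := by
      have := h.isOpen_compl
      rwa [hargmax, compl_compl] at this
    have hgen : TopologicalSpace.GenerateOpen
        {s | ∃ a : FlatL X, s = (Set.Ici a)ᶜ ∨ s = (Set.Iic a)ᶜ} {el x₀} := hopen
    have hfin := cofinite_of_generateOpen hgen x₀ rfl
    have hfin' : {x : X | x ≠ x₀}.Finite := by
      refine hfin.subset fun x hx => ?_
      simp only [Set.mem_setOf_eq, Set.mem_singleton_iff] at *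
      exact fun h => hx (el.inj h)
    have huniv : (Set.univ : Set X).Finite := by
      refine (hfin'.insert x₀).subset fun x _ => ?_
      by_cases h : x = x₀ <;> simp [h]
    exact Set.infinite_univ huniv
  refine ⟨FlatL X, inferInstance, el, x₀, f, ?_, ?_, ?_, ?_, hf1, hf0, ?_, ?_, hnotclosed, ?_⟩
  · intro a b h; injection h
  · exact fun x y hxy h => hxy (el_le_el.mp h)
  · intro x
    constructor
    · exact lt_of_le_of_ne bot_le (by rw [bot_eq]; simp)
    · exact lt_of_le_of_ne le_top (by rw [top_eq]; simp)
  · intro z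
    cases z with
    | bot => exact Or.inl bot_eq.symm
    | top => exact Or.inr (Or.inl top_eq.symm)
    | el x => exact Or.inr (Or.inr ⟨x, rfl⟩)
  · -- supermodular
    intro x y
    by_cases hxy : x ≤ y
    · rw [inf_eq_left.mpr hxy, sup_eq_right.mpr hxy]
    by_cases hyx : y ≤ x
    · rw [inf_eq_right.mpr hyx, sup_eq_left.mpr hyx]; exact le_of_eq (add_comm _ _)
    · rw [inf_incomp hxy hyx, sup_incomp hxy hyx,
        hf1 ⊥ hbotne, hf1 ⊤ htopne]
      exact add_le_add (hfle x) (hfle y)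
  · -- order USC
    intro D hne hD
    constructor
    · obtain ⟨m, hm, hmax⟩ := chain_greatest hne hD
      have hsup : sSup D = m := le_antisymm (sSup_le hmax) (le_sSup hm)
      rw [hsup]
      have hset : {j ∈ D | m ≤ j} = {m} := by
        ext j
        simp only [Set.mem_setOf_eq, Set.mem_singleton_iff]
        exact ⟨fun ⟨hj, hmj⟩ => le_antisymm (hmax j hj) hmj, fun h => by rw [h]; exact ⟨hm, le_refl m⟩⟩
      have hval : (fun i => sSup (f '' {j ∈ D | i ≤ j})) m = f m := by
        simp [hset]
      refine csInf_le ⟨0, fun r hr => ?_⟩ ⟨m, hm, hval⟩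
      obtain ⟨i, hi, rfl⟩ := hr
      have h1 : f i ∈ f '' {j ∈ D | i ≤ j} := ⟨i, ⟨hi, le_refl i⟩, rfl⟩
      have hba : BddAbove (f '' {j ∈ D | i ≤ j}) :=
        ⟨1, fun v hv => by obtain ⟨j, _, rfl⟩ := hv; exact hfle j⟩
      exact le_trans (hf0le i) (le_csSup hba h1)
    · obtain ⟨m, hm, hmin⟩ := chain_least hne hD
      have hinf : sInf D = m := le_antisymm (sInf_le hm) (le_sInf hmin)
      rw [hinf]
      have hset : {j ∈ D | j ≤ m} = {m} := by
        ext j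
        simp only [Set.mem_setOf_eq, Set.mem_singleton_iff]
        exact ⟨fun ⟨hj, hmj⟩ => le_antisymm hmj (hmin j hj), fun h => by rw [h]; exact ⟨hm, le_refl m⟩⟩
      have hval : (fun i => sSup (f '' {j ∈ D | j ≤ i})) m = f m := by
        simp [hset]
      refine csInf_le ⟨0, fun r hr => ?_⟩ ⟨m, hm, hval⟩
      obtain ⟨i, hi, rfl⟩ := hr
      have h1 : f i ∈ f '' {j ∈ D | j ≤ i} := ⟨i, ⟨hi, le_refl i⟩, rfl⟩
      have hba : BddAbove (f '' {j ∈ D | j ≤ i}) :=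
        ⟨1, fun v hv => by obtain ⟨j, _, rfl⟩ := hv; exact hfle j⟩
      exact le_trans (hf0le i) (le_csSup hba h1)
  · -- not USC
    intro h
    apply hnotclosed
    have h1 := h 1
    have : {x : FlatL X | (1:ℝ) ≤ f x} = {x : FlatL X | ∀ y : FlatL X, f y ≤ f x} := by
      ext z
      simp only [Set.mem_setOf_eq]
      constructor
      · intro hz y; exact le_trans (hfle y) hz
      · intro hz
        have := hz ⊤
        rw [hf1 ⊤ htopne] at this
        exact this
    rwa [this] at h1

end
end

section
/- Let L be a complete lattice and let X ⊆ L. Suppose every nonempty chain in L is finite (e.g., L is the lattice built from an infinite antichain X by adding a bottom m and top M). Then every subset of L is chain-subcomplete in L, yet (for the antichain example with X infinite and X viewed as a subset of L) X is not closed in the interval topology of L. Hence the converse of the statement 'interval-topology-closed implies chain-subcomplete' fails. -/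
/-! A finite chain contains its supremum and infimum, so when all chains are finite every subset
is chain-subcomplete. For an infinite antichain `X` with a bottom and a top adjoined, a basic
neighbourhood of the bottom in the interval topology is the complement of finitely many rays
`Ici a` with `a ≠ ⊥`, and each of them meets `X` in at most one point; so `X` accumulates at
the bottom and is not closed. -/

open Set Filter Topology

section ChainSubcomplete

variable {α : Type*}

theorem IsChain.exists_isGreatest_of_finite [Preorder α] {s : Set α} (hc : IsChain (· ≤ ·) s)
    (hf : s.Finite) (hne : s.Nonempty) : ∃ a, IsGreatest s a := by
  obtain ⟨a, ha⟩ := hf.exists_maximal hne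
  exact ⟨a, ha.prop, fun x hx => (hc.total hx ha.prop).elim id (ha.le_of_ge hx)⟩

theorem IsChain.exists_isLeast_of_finite [Preorder α] {s : Set α} (hc : IsChain (· ≤ ·) s)
    (hf : s.Finite) (hne : s.Nonempty) : ∃ a, IsLeast s a := by
  obtain ⟨a, ha⟩ := hf.exists_minimal hne
  exact ⟨a, ha.prop, fun x hx => (hc.total ha.prop hx).elim id (ha.le_of_le hx)⟩

theorem IsChain.sSup_mem_of_finite [CompleteLattice α] {s : Set α} (hc : IsChain (· ≤ ·) s)
    (hf : s.Finite) (hne : s.Nonempty) : sSup s ∈ s := by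
  obtain ⟨a, ha⟩ := hc.exists_isGreatest_of_finite hf hne
  exact ha.isLUB.sSup_eq ▸ ha.1

theorem IsChain.sInf_mem_of_finite [CompleteLattice α] {s : Set α} (hc : IsChain (· ≤ ·) s)
    (hf : s.Finite) (hne : s.Nonempty) : sInf s ∈ s := by
  obtain ⟨a, ha⟩ := hc.exists_isLeast_of_finite hf hne
  exact ha.isGLB.sInf_eq ▸ ha.1

end ChainSubcomplete

theorem tendsto_nhds_intervalTopology_iff {ι L : Type*} [Preorder L] {f : ι → L}
    {l : Filter ι} {b : L} :
    Tendsto f l (@nhds L (intervalTopology L) b) ↔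
      ∀ a, (¬a ≤ b → ∀ᶠ i in l, ¬a ≤ f i) ∧
        (¬b ≤ a → ∀ᶠ i in l, ¬f i ≤ a) := by
  rw [intervalTopology, TopologicalSpace.tendsto_nhds_generateFrom_iff]
  constructor
  · intro h a
    exact ⟨h _ ⟨a, Or.inl rfl⟩, h _ ⟨a, Or.inr rfl⟩⟩
  · rintro h _ ⟨a, rfl | rfl⟩
    exacts [(h a).1, (h a).2]

inductive Diamond : Type
  | bot
  | atom (n : ℕ)
  | top

namespace Diamond

instance : LE Diamond := ⟨fun a b => a = bot ∨ b = top ∨ a = b⟩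

theorem le_def {a b : Diamond} : a ≤ b ↔ a = bot ∨ b = top ∨ a = b := Iff.rfl

instance : PartialOrder Diamond where
  le_refl _ := Or.inr (Or.inr rfl)
  le_trans a b c := by cases a <;> cases b <;> cases c <;> simp_all [le_def]
  le_antisymm a b := by cases a <;> cases b <;> simp_all [le_def]

theorem bot_le (a : Diamond) : bot ≤ a := Or.inl rfl

theorem le_top (a : Diamond) : a ≤ top := Or.inr (Or.inl rfl)

theorem le_bot_iff {a : Diamond} : a ≤ bot ↔ a = bot := by cases a <;> simp [le_def]

theorem le_atom_iff {a : Diamond} {n : ℕ} : a ≤ atom n ↔ a = bot ∨ a = atom n := by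
  cases a <;> simp [le_def]

theorem atom_le_atom_iff {m n : ℕ} : atom m ≤ atom n ↔ m = n := by simp [le_atom_iff]

theorem exists_isLUB (S : Set Diamond) : ∃ x, IsLUB S x := by
  by_cases hS : ∃ n, S ⊆ {bot, atom n}
  · obtain ⟨n, hn⟩ := hS
    by_cases hmem : atom n ∈ S
    · exact ⟨atom n, fun x hx => le_atom_iff.2 (hn hx), fun b hb => hb hmem⟩
    · refine ⟨bot, fun x hx => ?_, fun b _ => bot_le b⟩
      rcases hn hx with rfl | rfl
      exacts [le_rfl, absurd hx hmem]
  · refine ⟨top, fun x _ => le_top x, fun b hb => ?_⟩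
    cases b with
    | bot => exact absurd ⟨0, fun x hx => Or.inl (le_bot_iff.1 (hb hx))⟩ hS
    | atom n => exact absurd ⟨n, fun x hx => le_atom_iff.1 (hb hx)⟩ hS
    | top => exact le_rfl

noncomputable instance : SupSet Diamond := ⟨fun S => (exists_isLUB S).choose⟩

noncomputable instance : CompleteLattice Diamond :=
  completeLatticeOfSup Diamond fun S => (exists_isLUB S).choose_spec

theorem finite_of_isChain (D : Set Diamond) (hD : IsChain (· ≤ ·) D) : D.Finite := by
  have hatoms : {n | atom n ∈ D}.Subsingleton := fun m hm n hn =>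
    (hD.total hm hn).elim atom_le_atom_iff.1 (fun h => (atom_le_atom_iff.1 h).symm)
  refine (((hatoms.finite.image atom).insert top).insert bot).subset fun x hx => ?_
  cases x with
  | bot => exact Or.inl rfl
  | atom n => exact Or.inr (Or.inr ⟨n, hx, rfl⟩)
  | top => exact Or.inr (Or.inl rfl)

theorem infinite_range_atom : (range atom).Infinite :=
  infinite_range_of_injective fun _ _ => atom.inj

theorem isAntichain_range_atom : IsAntichain (· ≤ ·) (range atom) := by
  rintro _ ⟨m, rfl⟩ _ ⟨n, rfl⟩ hne h
  exact hne (congrArg atom (atom_le_atom_iff.1 h))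

theorem tendsto_atom_cofinite_nhds_bot :
    Tendsto atom cofinite (@nhds Diamond (intervalTopology Diamond) bot) := by
  refine tendsto_nhds_intervalTopology_iff.2 fun a =>
    ⟨fun ha => ?_, fun ha => absurd (bot_le a) ha⟩
  cases a with
  | bot => exact absurd le_rfl ha
  | atom m =>
    exact (finite_singleton m).eventually_cofinite_notMem.mono fun n hn h =>
      hn (atom_le_atom_iff.1 h).symm
  | top => exact Eventually.of_forall fun n h => by simp [le_def] at h

theorem not_isClosed_range_atom : ¬ @IsClosed Diamond (intervalTopology Diamond) (range atom) :=
  fun hclosed => by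
    let := intervalTopology Diamond
    obtain ⟨n, hn⟩ := hclosed.mem_of_tendsto tendsto_atom_cofinite_nhds_bot
      (Eventually.of_forall (mem_range_self ·))
    cases hn

end Diamond

/-- In a complete lattice all of whose nonempty chains are finite, every
subset is chain-subcomplete; yet there is such a lattice (an infinite
antichain with a bottom and a top adjoined) containing a chain-subcomplete
subset — the infinite antichain itself — that is not closed in the interval
topology. Hence the converse of "interval-topology-closed implies
chain-subcomplete" fails. -/
theorem chainSubcomplete_not_closed :
    (∀ (L : Type) (_ : CompleteLattice L),
      (∀ D : Set L, IsChain (· ≤ ·) D → D.Finite) →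
      ∀ A : Set L, ∀ D : Set L, D ⊆ A → D.Nonempty → IsChain (· ≤ ·) D →
        sSup D ∈ A ∧ sInf D ∈ A) ∧
    (∃ (L : Type) (_ : CompleteLattice L) (X : Set L),
      X.Infinite ∧
      (∀ x ∈ X, ∀ y ∈ X, x ≠ y → ¬ x ≤ y) ∧
      (∀ D : Set L, IsChain (· ≤ ·) D → D.Finite) ∧
      ¬ @IsClosed L (intervalTopology L) X) := by
  refine ⟨fun L _ hfin A D hDA hne hchain => ?_, ?_⟩
  · exact ⟨hDA (hchain.sSup_mem_of_finite (hfin D hchain) hne),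
      hDA (hchain.sInf_mem_of_finite (hfin D hchain) hne)⟩
  · exact ⟨Diamond, inferInstance, range Diamond.atom, Diamond.infinite_range_atom,
      fun _ hx _ hy hne => Diamond.isAntichain_range_atom hx hy hne,
      Diamond.finite_of_isChain, Diamond.not_isClosed_range_atom⟩
end
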